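/- arXiv:2003.10056 — 2 statements merged into one kernel-verified Lean document; each statement's English description precedes it below -/
import Mathlib

section
/- Let d ≥ 1, α ∈ (-1, 0), and θ(x) = |x|^α on ℝ^d \ {0}. Let q : ℝ^d → ℝ^d be continuous. Then for every x ≠ 0, Δ_∞θ(x) + (q(x)·∇θ(x)) |∇θ(x)|² = α³ |x|^{3α−4} (α − 1 + q(x)·x). In particular, if (q(x)·x)₊ < 1 at x, then this expression is strictly positive. -/
/-!
Away from the origin `∇θ(x) = α |x|^(α-2) x` is a radial multiple of `x`, and differentiating
once more gives `D²θ(x) v = α |x|^(α-2) v + α (α-2) |x|^(α-4) ⟪x, v⟫ x`, so that `D²θ(x) x` is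
`α (α-1) |x|^(α-2) x`. Both terms of the identity are then explicit multiples of `|x|^(3α-4)`.
For the sign: `α³ < 0`, and `α - 1 + ⟪q x, x⟫ < α < 0` whenever `(⟪q x, x⟫)₊ < 1`.
-/

open scoped RealInnerProductSpace
open Real Filter

noncomputable def infLap {d : ℕ} (f : EuclideanSpace ℝ (Fin d) → ℝ)
    (x : EuclideanSpace ℝ (Fin d)) : ℝ :=
  ⟪gradient f x, fderiv ℝ (gradient f) x (gradient f x)⟫

noncomputable def infLapG {d : ℕ} (γ : ℝ) (f : EuclideanSpace ℝ (Fin d) → ℝ)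
    (x : EuclideanSpace ℝ (Fin d)) : ℝ :=
  ‖gradient f x‖ ^ (-γ) * infLap f x

open Topology

theorem rpow_three_mul_sub_four {t : ℝ} (ht : 0 < t) (p : ℝ) :
    t ^ (3 * p - 4) = (t ^ (p - 2)) ^ 3 * t ^ 2 := by
  rw [← rpow_natCast, ← rpow_mul ht.le, ← rpow_natCast, ← rpow_add ht]
  ring_nf

variable {F : Type*} [NormedAddCommGroup F] [InnerProductSpace ℝ F]

theorem hasFDerivAt_norm_rpow_of_ne_zero (p : ℝ) {x : F} (hx : x ≠ 0) :
    HasFDerivAt (fun y : F => ‖y‖ ^ p) ((p * ‖x‖ ^ (p - 2)) • innerSL ℝ x) x := by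
  have hpow : ∀ (y : F) (s : ℝ), (‖y‖ ^ 2) ^ (s / 2) = ‖y‖ ^ s := fun y s => by
    rw [← rpow_natCast, ← rpow_mul (norm_nonneg y)]
    ring_nf
  have hx2 : ‖x‖ ^ 2 ≠ 0 := by positivity
  have h := (hasDerivAt_rpow_const (p := p / 2) (Or.inl hx2)).comp_hasFDerivAt x
    (hasStrictFDerivAt_norm_sq x).hasFDerivAt
  simp only [Function.comp_def, hpow] at h
  refine h.congr_fderiv ?_
  rw [show p / 2 - 1 = (p - 2) / 2 by ring, hpow]
  module

theorem hasGradientAt_norm_rpow_of_ne_zero [CompleteSpace F] (p : ℝ) {x : F} (hx : x ≠ 0) :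
    HasGradientAt (fun y : F => ‖y‖ ^ p) ((p * ‖x‖ ^ (p - 2)) • x) x := by
  rw [hasGradientAt_iff_hasFDerivAt, map_smul]
  exact hasFDerivAt_norm_rpow_of_ne_zero p hx

theorem gradient_norm_rpow_eventuallyEq [CompleteSpace F] (p : ℝ) {x : F} (hx : x ≠ 0) :
    gradient (fun y : F => ‖y‖ ^ p) =ᶠ[𝓝 x] fun y => (p * ‖y‖ ^ (p - 2)) • y := by
  filter_upwards [isOpen_compl_singleton.mem_nhds hx] with y hy
  exact (hasGradientAt_norm_rpow_of_ne_zero p hy).gradient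

theorem hasFDerivAt_mul_norm_rpow_smul (c r : ℝ) {x : F} (hx : x ≠ 0) :
    HasFDerivAt (fun y : F => (c * ‖y‖ ^ r) • y)
      ((c * ‖x‖ ^ r) • ContinuousLinearMap.id ℝ F
        + ((c * (r * ‖x‖ ^ (r - 2))) • innerSL ℝ x).smulRight x) x := by
  have h := ((hasFDerivAt_norm_rpow_of_ne_zero r hx).const_mul c).smul (hasFDerivAt_id x)
  rwa [smul_smul] at h

theorem inner_gradient_fderiv_gradient_norm_rpow [CompleteSpace F] (p : ℝ) {x : F}
    (hx : x ≠ 0) :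
    ⟪gradient (fun y : F => ‖y‖ ^ p) x,
        fderiv ℝ (gradient fun y : F => ‖y‖ ^ p) x (gradient (fun y : F => ‖y‖ ^ p) x)⟫
      = p ^ 3 * (p - 1) * ‖x‖ ^ (3 * p - 4) := by
  have hr : 0 < ‖x‖ := norm_pos_iff.mpr hx
  have hgrad := gradient_norm_rpow_eventuallyEq p hx
  rw [hgrad.fderiv_eq, hgrad.eq_of_nhds, (hasFDerivAt_mul_norm_rpow_smul p (p - 2) hx).fderiv]
  have hpow : ‖x‖ ^ (p - 2 - 2) = ‖x‖ ^ (p - 2) / ‖x‖ ^ 2 := by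
    rw [rpow_sub hr, rpow_two]
  simp only [add_apply, smul_apply, ContinuousLinearMap.coe_id', id_eq,
    ContinuousLinearMap.smulRight_apply, innerSL_apply_apply, inner_add_right, real_inner_smul_left, real_inner_smul_right, real_inner_self_eq_norm_sq,
    norm_smul, Real.norm_eq_abs, mul_pow, sq_abs, smul_eq_mul, hpow, rpow_three_mul_sub_four hr]
  field_simp [hr.ne']
  ring

theorem inner_mul_norm_sq_gradient_norm_rpow [CompleteSpace F] (p : ℝ) {x : F} (hx : x ≠ 0)
    (v : F) :
    ⟪v, gradient (fun y : F => ‖y‖ ^ p) x⟫ * ‖gradient (fun y : F => ‖y‖ ^ p) x‖ ^ 2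
      = p ^ 3 * ‖x‖ ^ (3 * p - 4) * ⟪v, x⟫ := by
  have hr : 0 < ‖x‖ := norm_pos_iff.mpr hx
  rw [(hasGradientAt_norm_rpow_of_ne_zero p hx).gradient, real_inner_smul_right, norm_smul,
    Real.norm_eq_abs, mul_pow, sq_abs, rpow_three_mul_sub_four hr]
  ring

theorem stmt1_general (d : ℕ) (α : ℝ) (hα : α ∈ Set.Ioo (-1 : ℝ) 0)
    (q : EuclideanSpace ℝ (Fin d) → EuclideanSpace ℝ (Fin d))
    (θ : EuclideanSpace ℝ (Fin d) → ℝ) (hθ : ∀ x, θ x = ‖x‖ ^ α) :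
    ∀ x : EuclideanSpace ℝ (Fin d), x ≠ 0 →
      (infLap θ x + ⟪q x, gradient θ x⟫ * ‖gradient θ x‖ ^ (2 : ℕ)
        = α ^ (3 : ℕ) * ‖x‖ ^ (3 * α - 4) * (α - 1 + ⟪q x, x⟫))
      ∧ (max (⟪q x, x⟫) 0 < 1 →
          0 < α ^ (3 : ℕ) * ‖x‖ ^ (3 * α - 4) * (α - 1 + ⟪q x, x⟫)) := by
  obtain rfl : θ = fun y => ‖y‖ ^ α := funext hθ
  intro x hx
  refine ⟨?_, fun hqx => ?_⟩
  · rw [infLap, inner_gradient_fderiv_gradient_norm_rpow α hx,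
      inner_mul_norm_sq_gradient_norm_rpow α hx]
    ring
  · have hα3 : α ^ 3 < 0 := Odd.pow_neg (by decide) hα.2
    have hdrift : α - 1 + ⟪q x, x⟫ < 0 := by linarith [le_max_left ⟪q x, x⟫ 0, hα.2]
    exact mul_pos_of_neg_of_neg (mul_neg_of_neg_of_pos hα3 (by positivity)) hdrift

theorem stmt1 (d : ℕ) (hd : 1 ≤ d) (α : ℝ) (hα : α ∈ Set.Ioo (-1 : ℝ) 0)
    (q : EuclideanSpace ℝ (Fin d) → EuclideanSpace ℝ (Fin d)) (hq : Continuous q)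
    (θ : EuclideanSpace ℝ (Fin d) → ℝ) (hθ : ∀ x, θ x = ‖x‖ ^ α) :
    ∀ x : EuclideanSpace ℝ (Fin d), x ≠ 0 →
      (infLap θ x + ⟪q x, gradient θ x⟫ * ‖gradient θ x‖ ^ (2 : ℕ)
        = α ^ (3 : ℕ) * ‖x‖ ^ (3 * α - 4) * (α - 1 + ⟪q x, x⟫))
      ∧ (max (⟪q x, x⟫) 0 < 1 →
          0 < α ^ (3 : ℕ) * ‖x‖ ^ (3 * α - 4) * (α - 1 + ⟪q x, x⟫)) :=
  stmt1_general d α hα q θ hθ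
end

section
/- Let r > 0, and let q, c : ℝ^d → ℝ^d, ℝ be bounded on the ball B_{2r}. Define, for α > 0, u(x) = e^{−α|x|} − e^{−αr}. Then for all x with r/2 ≤ |x| ≤ r and x ≠ 0, and any γ ∈ [0,2]: Δ^γ_∞u(x) + (q(x)·∇u(x))|∇u(x)|^{2−γ} + c(x)u(x)^{3−γ} ≥ e^{−α(3−γ)|x|}[α^{4−γ} − ‖q‖_∞ α^{3−γ} − ‖c‖_∞ (1 − e^{−α(r−|x|)})^{3−γ}]. In particular, this is strictly positive for all sufficiently large α (depending only on ‖q‖_∞, ‖c‖_∞, γ). -/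
/-!
The barrier is radial, `u = φ ∘ ‖·‖` with `φ t = e^{-αt} - e^{-αr}`. For a radial function
`∇u(x) = φ'(|x|) x / |x|` and `⟨∇u, D²u ∇u⟩ = φ'(|x|)² φ''(|x|)`, which here is `α⁴ e^{-3α|x|}`;
since `|∇u| = α e^{-α|x|}`, this gives `Δ^γ_∞ u = α^{4-γ} e^{-α(3-γ)|x|}`. Cauchy–Schwarz bounds the
drift term below by `-‖q‖ |∇u|^{3-γ}`, and `u = e^{-α|x|} (1 - e^{-α(r-|x|)}) ≥ 0` bounds the
zeroth-order term below by `-‖c‖ u^{3-γ}`. The bracket is at least `α^{3-γ} (α - ‖q‖) - ‖c‖`,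
positive as soon as `α ≥ max 1 (‖q‖ + ‖c‖ + 1)`.
-/

open scoped RealInnerProductSpace
open Real Filter

open Topology

section Radial

variable {F : Type*} [NormedAddCommGroup F] [InnerProductSpace ℝ F]

theorem hasFDerivAt_norm_of_ne_zero {x : F} (hx : x ≠ 0) :
    HasFDerivAt (fun y : F => ‖y‖) (‖x‖⁻¹ • innerSL ℝ x) x := by
  have h := (hasStrictFDerivAt_norm_sq x).hasFDerivAt.sqrt (by positivity)
  simp only [Real.sqrt_sq (norm_nonneg _)] at h
  convert h using 1
  ext v
  simp only [smul_apply, coe_innerSL_apply, smul_eq_mul, one_div, mul_inv_rev, nsmul_eq_mul,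
    Nat.cast_ofNat]
  field_simp

theorem neg_mul_rpow_le_inner_mul_rpow {v w : F} {Q p : ℝ} (hv : ‖v‖ ≤ Q) (hw : w ≠ 0) :
    -(Q * ‖w‖ ^ (p + 1)) ≤ ⟪v, w⟫ * ‖w‖ ^ p := by
  have hinner : -(Q * ‖w‖) ≤ ⟪v, w⟫ := by
    have := neg_abs_le ⟪v, w⟫
    nlinarith [abs_real_inner_le_norm v w, norm_nonneg w]
  rw [rpow_add_one (norm_ne_zero_iff.mpr hw)]
  nlinarith [rpow_nonneg (norm_nonneg w) p]

variable [CompleteSpace F]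

theorem hasGradientAt_comp_norm {φ : ℝ → ℝ} {φ' : ℝ} {x : F} (hx : x ≠ 0)
    (hφ : HasDerivAt φ φ' ‖x‖) :
    HasGradientAt (fun y => φ ‖y‖) ((φ' / ‖x‖) • x) x := by
  rw [hasGradientAt_iff_hasFDerivAt]
  refine (hφ.comp_hasFDerivAt x (hasFDerivAt_norm_of_ne_zero hx)).congr_fderiv ?_
  ext v
  simp only [smul_apply, coe_innerSL_apply, smul_eq_mul, map_smul,
    InnerProductSpace.toDual_apply_apply]
  ring

theorem gradient_comp_norm_eventuallyEq {φ φ' : ℝ → ℝ} {x : F} (hx : x ≠ 0)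
    (hφ : ∀ᶠ t in 𝓝 ‖x‖, HasDerivAt φ (φ' t) t) :
    gradient (fun y => φ ‖y‖) =ᶠ[𝓝 x] fun y => (φ' ‖y‖ / ‖y‖) • y := by
  filter_upwards [isOpen_compl_singleton.mem_nhds hx, (continuous_norm.tendsto x).eventually hφ]
    with y hy0 hy
  exact (hasGradientAt_comp_norm hy0 hy).gradient

end Radial

theorem infLap_comp_norm {d : ℕ} {φ φ' : ℝ → ℝ} {φ'' : ℝ} {x : EuclideanSpace ℝ (Fin d)}
    (hx : x ≠ 0) (hφ : ∀ᶠ t in 𝓝 ‖x‖, HasDerivAt φ (φ' t) t) (hφ' : HasDerivAt φ' φ'' ‖x‖) :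
    infLap (fun y => φ ‖y‖) x = φ' ‖x‖ ^ 2 * φ'' := by
  have hρ : ‖x‖ ≠ 0 := norm_ne_zero_iff.mpr hx
  have hfield : HasFDerivAt (fun y => (φ' ‖y‖ / ‖y‖) • y) _ x :=
    ((hφ'.div (hasDerivAt_id _) hρ).comp_hasFDerivAt x (hasFDerivAt_norm_of_ne_zero hx)).smul
      (hasFDerivAt_id x)
  rw [infLap, (hasGradientAt_comp_norm hx hφ.self_of_nhds).gradient,
    (gradient_comp_norm_eventuallyEq hx hφ).fderiv_eq, hfield.fderiv]
  simp only [Function.comp_apply, Pi.div_apply, id_eq, mul_one, map_smul, add_apply, smul_apply,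
    ContinuousLinearMap.id_apply, ContinuousLinearMap.smulRight_apply, coe_innerSL_apply,
    smul_eq_mul, inner_add_right, real_inner_smul_left, real_inner_smul_right,
    real_inner_self_eq_norm_sq, norm_smul, norm_div, norm_eq_abs, abs_norm, mul_pow]
  field_simp
  rw [sq_abs]
  ring

section Barrier

variable {d : ℕ}

noncomputable def expBarrier (α r : ℝ) (y : EuclideanSpace ℝ (Fin d)) : ℝ :=
  exp (-α * ‖y‖) - exp (-α * r)

theorem hasDerivAt_exp_neg_mul (α t : ℝ) :
    HasDerivAt (fun s => exp (-α * s)) (-α * exp (-α * t)) t := by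
  simpa [mul_comm] using ((hasDerivAt_id t).const_mul (-α)).exp

theorem gradient_expBarrier {α r : ℝ} {x : EuclideanSpace ℝ (Fin d)} (hx : x ≠ 0) :
    gradient (expBarrier α r) x = (-α * exp (-α * ‖x‖) / ‖x‖) • x :=
  (hasGradientAt_comp_norm (φ := fun t => exp (-α * t) - exp (-α * r)) hx
    ((hasDerivAt_exp_neg_mul α ‖x‖).sub_const _)).gradient

theorem norm_gradient_expBarrier {α r : ℝ} (hα : 0 ≤ α) {x : EuclideanSpace ℝ (Fin d)}
    (hx : x ≠ 0) : ‖gradient (expBarrier α r) x‖ = α * exp (-α * ‖x‖) := by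
  rw [gradient_expBarrier hx, norm_smul, norm_div, norm_mul, norm_neg, Real.norm_of_nonneg hα,
    norm_of_nonneg (exp_pos _).le, norm_norm, div_mul_cancel₀ _ (norm_ne_zero_iff.mpr hx)]

theorem infLap_expBarrier {α r : ℝ} {x : EuclideanSpace ℝ (Fin d)} (hx : x ≠ 0) :
    infLap (expBarrier α r) x = α ^ 4 * exp (-α * ‖x‖) ^ 3 := by
  have h : infLap (expBarrier α r) x =
      (-α * exp (-α * ‖x‖)) ^ 2 * (-α * (-α * exp (-α * ‖x‖))) :=
    infLap_comp_norm (φ := fun t => exp (-α * t) - exp (-α * r)) hx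
      (Eventually.of_forall fun t => (hasDerivAt_exp_neg_mul α t).sub_const _)
      ((hasDerivAt_exp_neg_mul α ‖x‖).const_mul (-α))
  rw [h]
  ring

theorem infLapG_expBarrier {α r : ℝ} (γ : ℝ) (hα : 0 < α) {x : EuclideanSpace ℝ (Fin d)}
    (hx : x ≠ 0) :
    infLapG γ (expBarrier α r) x = α ^ (4 - γ) * exp (-α * ‖x‖) ^ (3 - γ) := by
  have hE := exp_pos (-α * ‖x‖)
  rw [infLapG, infLap_expBarrier hx, norm_gradient_expBarrier hα.le hx, mul_rpow hα.le hE.le,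
    rpow_sub hα, rpow_sub hE, rpow_neg hα.le, rpow_neg hE.le]
  norm_cast
  field_simp

theorem one_sub_exp_neg_mul_mem_Icc {α ρ r : ℝ} (hα : 0 ≤ α) (hρ : ρ ≤ r) :
    1 - exp (-α * (r - ρ)) ∈ Set.Icc 0 1 := by
  have h := exp_pos (-α * (r - ρ))
  have h1 : exp (-α * (r - ρ)) ≤ 1 := exp_le_one_iff.mpr (by nlinarith)
  constructor <;> linarith

theorem expBarrier_eq_mul (α r : ℝ) (x : EuclideanSpace ℝ (Fin d)) :
    expBarrier α r x = exp (-α * ‖x‖) * (1 - exp (-α * (r - ‖x‖))) := by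
  rw [expBarrier, mul_one_sub, ← exp_add]
  ring_nf

theorem expBarrier_lower_bound {α r γ Q C k : ℝ} {x v : EuclideanSpace ℝ (Fin d)} (hα : 0 < α)
    (hx : x ≠ 0) (hxr : ‖x‖ ≤ r) (hv : ‖v‖ ≤ Q) (hk : |k| ≤ C) :
    infLapG γ (expBarrier α r) x
        + ⟪v, gradient (expBarrier α r) x⟫ * ‖gradient (expBarrier α r) x‖ ^ (2 - γ)
        + k * expBarrier α r x ^ (3 - γ)
      ≥ exp (-α * (3 - γ) * ‖x‖) *
          (α ^ (4 - γ) - Q * α ^ (3 - γ) - C * (1 - exp (-α * (r - ‖x‖))) ^ (3 - γ)) := by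
  set E := exp (-α * ‖x‖) with hE_def
  set s := 1 - exp (-α * (r - ‖x‖))
  have hE : 0 < E := exp_pos _
  have hs : 0 ≤ s := (one_sub_exp_neg_mul_mem_Icc hα.le hxr).1
  have hexp : exp (-α * (3 - γ) * ‖x‖) = E ^ (3 - γ) := by
    rw [hE_def, ← exp_mul]
    ring_nf
  have hdrift : -(Q * α ^ (3 - γ) * E ^ (3 - γ)) ≤
      ⟪v, gradient (expBarrier α r) x⟫ * ‖gradient (expBarrier α r) x‖ ^ (2 - γ) := by
    have hgrad : gradient (expBarrier α r) x ≠ 0 := by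
      rw [← norm_pos_iff, norm_gradient_expBarrier hα.le hx]
      positivity
    have h := neg_mul_rpow_le_inner_mul_rpow (p := 2 - γ) hv hgrad
    rw [norm_gradient_expBarrier hα.le hx] at h ⊢
    rwa [show 2 - γ + 1 = 3 - γ by ring, mul_rpow hα.le hE.le, ← mul_assoc] at h
  have hzeroth : -(C * (E ^ (3 - γ) * s ^ (3 - γ))) ≤ k * expBarrier α r x ^ (3 - γ) := by
    rw [expBarrier_eq_mul, mul_rpow hE.le hs]
    have := mul_nonneg (rpow_nonneg hE.le (3 - γ)) (rpow_nonneg hs (3 - γ))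
    nlinarith [neg_abs_le k]
  rw [infLapG_expBarrier γ hα hx, hexp, ge_iff_le]
  linarith

theorem expBarrier_coeff_pos {α γ Q C s : ℝ} (hγ : γ ≤ 3) (hC : 0 ≤ C) (hs : s ∈ Set.Icc 0 1)
    (hα : max 1 (Q + C + 1) ≤ α) :
    0 < α ^ (4 - γ) - Q * α ^ (3 - γ) - C * s ^ (3 - γ) := by
  obtain ⟨hα1, hαQ⟩ := max_le_iff.mp hα
  have hp : 0 ≤ 3 - γ := by linarith
  have hαp : 1 ≤ α ^ (3 - γ) := one_le_rpow hα1 hp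
  have hsp : s ^ (3 - γ) ≤ 1 := rpow_le_one hs.1 hs.2 hp
  have h4 : α ^ (4 - γ) = α ^ (3 - γ) * α := by
    rw [show 4 - γ = 3 - γ + 1 by ring, rpow_add_one (by positivity)]
  rw [sub_pos]
  calc C * s ^ (3 - γ) ≤ C := mul_le_of_le_one_right hC hsp
    _ < C + 1 := lt_add_one C
    _ ≤ α ^ (3 - γ) * (C + 1) := le_mul_of_one_le_left (by positivity) hαp
    _ ≤ α ^ (3 - γ) * (α - Q) := by gcongr; linarith
    _ = α ^ (4 - γ) - Q * α ^ (3 - γ) := by rw [h4]; ring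

end Barrier

theorem stmt7_general (d : ℕ) (r γ Q C : ℝ) (hγ : γ ∈ Set.Icc (0 : ℝ) 2)
    (q : EuclideanSpace ℝ (Fin d) → EuclideanSpace ℝ (Fin d))
    (c : EuclideanSpace ℝ (Fin d) → ℝ)
    (hQ : ∀ x : EuclideanSpace ℝ (Fin d), ‖x‖ ≤ 2 * r → ‖q x‖ ≤ Q)
    (hC : ∀ x : EuclideanSpace ℝ (Fin d), ‖x‖ ≤ 2 * r → |c x| ≤ C)
    (hC0 : 0 ≤ C) :
    (∀ α : ℝ, 0 < α → ∀ x : EuclideanSpace ℝ (Fin d),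
        r / 2 ≤ ‖x‖ → ‖x‖ ≤ r → x ≠ 0 →
      infLapG γ (fun y => Real.exp (-α * ‖y‖) - Real.exp (-α * r)) x
        + ⟪q x, gradient (fun y => Real.exp (-α * ‖y‖) - Real.exp (-α * r)) x⟫
          * ‖gradient (fun y => Real.exp (-α * ‖y‖) - Real.exp (-α * r)) x‖ ^ (2 - γ)
        + c x * (Real.exp (-α * ‖x‖) - Real.exp (-α * r)) ^ (3 - γ)
      ≥ Real.exp (-α * (3 - γ) * ‖x‖) *
          (α ^ (4 - γ) - Q * α ^ (3 - γ)
            - C * (1 - Real.exp (-α * (r - ‖x‖))) ^ (3 - γ)))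
    ∧ ∃ α₀ : ℝ, 0 < α₀ ∧ ∀ α : ℝ, α₀ ≤ α → ∀ x : EuclideanSpace ℝ (Fin d),
        r / 2 ≤ ‖x‖ → ‖x‖ ≤ r →
        0 < Real.exp (-α * (3 - γ) * ‖x‖) *
            (α ^ (4 - γ) - Q * α ^ (3 - γ)
              - C * (1 - Real.exp (-α * (r - ‖x‖))) ^ (3 - γ)) := by
  refine ⟨fun α hα x _ hxr hx => ?_, max 1 (Q + C + 1), lt_max_of_lt_left one_pos,
    fun α hα x _ hxr => ?_⟩
  · have hx2r : ‖x‖ ≤ 2 * r := by linarith [norm_nonneg x]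
    exact expBarrier_lower_bound hα hx hxr (hQ x hx2r) (hC x hx2r)
  · have hα0 : 0 < α := (lt_max_of_lt_left one_pos).trans_le hα
    exact mul_pos (exp_pos _) (expBarrier_coeff_pos (by linarith [hγ.2]) hC0
      (one_sub_exp_neg_mul_mem_Icc hα0.le hxr) hα)

theorem stmt7 (d : ℕ) (r γ Q C : ℝ) (hr : 0 < r) (hγ : γ ∈ Set.Icc (0 : ℝ) 2)
    (q : EuclideanSpace ℝ (Fin d) → EuclideanSpace ℝ (Fin d))
    (c : EuclideanSpace ℝ (Fin d) → ℝ)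
    (hQ : ∀ x : EuclideanSpace ℝ (Fin d), ‖x‖ ≤ 2 * r → ‖q x‖ ≤ Q)
    (hC : ∀ x : EuclideanSpace ℝ (Fin d), ‖x‖ ≤ 2 * r → |c x| ≤ C)
    (hQ0 : 0 ≤ Q) (hC0 : 0 ≤ C) :
    (∀ α : ℝ, 0 < α → ∀ x : EuclideanSpace ℝ (Fin d),
        r / 2 ≤ ‖x‖ → ‖x‖ ≤ r → x ≠ 0 →
      infLapG γ (fun y => Real.exp (-α * ‖y‖) - Real.exp (-α * r)) x
        + ⟪q x, gradient (fun y => Real.exp (-α * ‖y‖) - Real.exp (-α * r)) x⟫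
          * ‖gradient (fun y => Real.exp (-α * ‖y‖) - Real.exp (-α * r)) x‖ ^ (2 - γ)
        + c x * (Real.exp (-α * ‖x‖) - Real.exp (-α * r)) ^ (3 - γ)
      ≥ Real.exp (-α * (3 - γ) * ‖x‖) *
          (α ^ (4 - γ) - Q * α ^ (3 - γ)
            - C * (1 - Real.exp (-α * (r - ‖x‖))) ^ (3 - γ)))
    ∧ ∃ α₀ : ℝ, 0 < α₀ ∧ ∀ α : ℝ, α₀ ≤ α → ∀ x : EuclideanSpace ℝ (Fin d),
        r / 2 ≤ ‖x‖ → ‖x‖ ≤ r →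
        0 < Real.exp (-α * (3 - γ) * ‖x‖) *
            (α ^ (4 - γ) - Q * α ^ (3 - γ)
              - C * (1 - Real.exp (-α * (r - ‖x‖))) ^ (3 - γ)) :=
  stmt7_general d r γ Q C hγ q c hQ hC hC0
end
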